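/- Let G be any subgroup of PL₊(I) (not necessarily finitely generated). Then G admits a transition chain if and only if G admits a pair of element orbitals sharing exactly one endpoint (a 'one-sided overlap'); equivalently, each of these conditions holds if and only if G admits a bad overlap. -/

import Mathlib

open Set

namespace PLPaper

/-- We model `PL₊(I)` inside the group of bijections of `ℝ` with *opposite*
composition, so that the group acts on `ℝ` on the right:
`x · (g * h) = (x · g) · h`. -/
abbrev PermR : Type := (Equiv.Perm ℝ)ᵐᵒᵖ

/-- The (right) action of `g` on the point `x`. -/
def ap (g : PermR) (x : ℝ) : ℝ := g.unop x

/-- `g` is affine on a neighbourhood of `x`. -/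
def IsLocallyAffineAt (g : PermR) (x : ℝ) : Prop :=
  ∃ m b : ℝ, ∀ᶠ y in nhds x, ap g y = m * y + b

/-- The breakpoints of `g`: points of `(0,1)` where `g` is not locally affine
(equivalently, for a PL map, where the derivative fails to exist). -/
def Breakpoints (g : PermR) : Set ℝ :=
  {x ∈ Ioo (0:ℝ) 1 | ¬ IsLocallyAffineAt g x}

/-- `g` is an orientation-preserving piecewise-linear homeomorphism of `[0,1]`
(extended by the identity to all of `ℝ`), with finitely many breakpoints. -/
def IsPL (g : PermR) : Prop :=
  StrictMono (ap g) ∧ (∀ x ∉ Ioo (0:ℝ) 1, ap g x = x) ∧ (Breakpoints g).Finite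

/-- The support of `g`. -/
def Supp (g : PermR) : Set ℝ := {x | ap g x ≠ x}

/-- `(a,b)` is an orbital of `g`, i.e. a connected component of `Supp g`. -/
def IsOrbital (g : PermR) (a b : ℝ) : Prop :=
  a < b ∧ Ioo a b ⊆ Supp g ∧ a ∉ Supp g ∧ b ∉ Supp g

/-- The support of a subgroup `G`. -/
def GSupp (G : Subgroup PermR) : Set ℝ := ⋃ g ∈ (G : Set PermR), Supp g

/-- `(a,b)` is an orbital of the group `G`, i.e. a connected component of its support. -/
def IsGroupOrbital (G : Subgroup PermR) (a b : ℝ) : Prop :=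
  a < b ∧ Ioo a b ⊆ GSupp G ∧ a ∉ GSupp G ∧ b ∉ GSupp G

/-- The pair `g, h` carries a transition chain: orbitals `(a,b)` of `g` and
`(c,d)` of `h` with `a < c < b < d`. -/
def ElemsTransitionChain (g h : PermR) : Prop :=
  ∃ a b c d : ℝ, IsOrbital g a b ∧ IsOrbital h c d ∧ a < c ∧ c < b ∧ b < d

/-- The pair `g, h` carries a one-sided overlap: orbitals `(a,b)` of `g` and
`(a,c)` of `h`, or `(a,b)` of `g` and `(c,b)` of `h`, where `a < c < b`. -/
def ElemsOneSidedOverlap (g h : PermR) : Prop :=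
  ∃ a b c : ℝ, a < c ∧ c < b ∧
    ((IsOrbital g a b ∧ IsOrbital h a c) ∨ (IsOrbital g a b ∧ IsOrbital h c b))

def AdmitsTransitionChain (G : Subgroup PermR) : Prop :=
  ∃ g ∈ G, ∃ h ∈ G, ElemsTransitionChain g h

def AdmitsOneSidedOverlap (G : Subgroup PermR) : Prop :=
  ∃ g ∈ G, ∃ h ∈ G, ElemsOneSidedOverlap g h

/-- `G` admits a bad overlap: orbitals `A` of `f ∈ G` and `B` of `g ∈ G` which
intersect, are distinct, and neither closure is contained in the other orbital. -/
def AdmitsBadOverlap (G : Subgroup PermR) : Prop :=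
  ∃ f ∈ G, ∃ g ∈ G, ∃ a b c d : ℝ, IsOrbital f a b ∧ IsOrbital g c d ∧
    (Ioo a b ∩ Ioo c d).Nonempty ∧ Ioo a b ≠ Ioo c d ∧
    ¬ Icc a b ⊆ Ioo c d ∧ ¬ Icc c d ⊆ Ioo a b

/-- A tower: a set of signed orbitals `((a,b), g)` with pairwise nested orbitals,
where equal orbitals force equal signatures. -/
def IsTower (T : Set ((ℝ × ℝ) × PermR)) : Prop :=
  (∀ p ∈ T, IsOrbital p.2 p.1.1 p.1.2) ∧
  (∀ p ∈ T, ∀ q ∈ T,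
      Ioo p.1.1 p.1.2 ⊆ Ioo q.1.1 q.1.2 ∨ Ioo q.1.1 q.1.2 ⊆ Ioo p.1.1 p.1.2) ∧
  (∀ p ∈ T, ∀ q ∈ T, p.1 = q.1 → p.2 = q.2)

/-- `G` admits the tower `T` if `T` is a tower all of whose signatures lie in `G`. -/
def AdmitsTower (G : Subgroup PermR) (T : Set ((ℝ × ℝ) × PermR)) : Prop :=
  IsTower T ∧ ∀ p ∈ T, p.2 ∈ G

def AdmitsInfiniteTower (G : Subgroup PermR) : Prop :=
  ∃ T : Set ((ℝ × ℝ) × PermR), AdmitsTower G T ∧ T.Infinite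

/-- The set of breakpoints of the elements of a set `S`. -/
def BreakSet (S : Set PermR) : Set ℝ := ⋃ g ∈ S, Breakpoints g

/-- The derived length of a group: the least `n` with `derivedSeries G n = ⊥`. -/
noncomputable def derivedLength (G : Type*) [Group G] : ℕ :=
  sInf {n : ℕ | derivedSeries G n = ⊥}

/-!
A transition chain `a < c < b < d` of orbitals `(a,b)` of `g` and `(c,d)` of `h` can be pushed
to the left: if `h` moves `a`, the orbital of `h` around `a` chains with `(a,b)`. A PL map has
finitely many orbitals, so in the leftmost chain `h` fixes `a`, and then `h⁻¹ g h` has the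
orbital `(a, b·h) ≠ (a, b)`: a one-sided overlap.

Conversely, let orbitals `(a,b)` of `g` and `(a,c)` of `h` share the endpoint `a`. Choosing
`γ = g^{±1}` with `c·γ < c`, the conjugate `γ⁻¹ h γ` has the orbital `(a, c·γ)`, and the
commutator `⁅γ⁻¹, h⁆` moves `c·γ` but is the identity near `a`: near a common fixed point PL
maps are linear on each side, and such germs commute. So the orbital of the commutator around
`c·γ` starts to the right of `a` and chains with `(a, c·γ)`.

Bad overlaps are, up to swapping the two orbitals, transition chains or one-sided overlaps.
-/

open Filter Topology
open scoped commutatorElement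

@[simp] lemma ap_mul (p q : PermR) (x : ℝ) : ap (p * q) x = ap q (ap p x) := rfl

@[simp] lemma ap_inv_ap (p : PermR) (x : ℝ) : ap p⁻¹ (ap p x) = x := p.unop.symm_apply_apply x

@[simp] lemma ap_ap_inv (p : PermR) (x : ℝ) : ap p (ap p⁻¹ x) = x := p.unop.apply_symm_apply x

lemma ap_eq_iff_eq_ap_inv {p : PermR} {x y : ℝ} : ap p x = y ↔ x = ap p⁻¹ y :=
  (p.unop.eq_symm_apply).symm

lemma ap_inv_eq_self {p : PermR} {x : ℝ} : ap p⁻¹ x = x ↔ ap p x = x := by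
  rw [eq_comm, ← ap_eq_iff_eq_ap_inv]

lemma mem_supp_conj {γ h : PermR} {x : ℝ} : x ∈ Supp (γ⁻¹ * h * γ) ↔ ap γ⁻¹ x ∈ Supp h :=
  show ap γ (ap h (ap γ⁻¹ x)) ≠ x ↔ _ from ap_eq_iff_eq_ap_inv.not

lemma IsOrbital.conj {h γ : PermR} (hγ : StrictMono (ap γ)) {α β : ℝ} (ho : IsOrbital h α β) :
    IsOrbital (γ⁻¹ * h * γ) (ap γ α) (ap γ β) := by
  refine ⟨hγ ho.1, fun x hx => mem_supp_conj.2 (ho.2.1 ⟨?_, ?_⟩), ?_, ?_⟩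
  · rw [← hγ.lt_iff_lt, ap_ap_inv]
    exact hx.1
  · rw [← hγ.lt_iff_lt, ap_ap_inv]
    exact hx.2
  · rw [mem_supp_conj, ap_inv_ap]
    exact ho.2.2.1
  · rw [mem_supp_conj, ap_inv_ap]
    exact ho.2.2.2

lemma IsOrbital.left_eq {g : PermR} {a b a' b' x : ℝ} (h : IsOrbital g a b)
    (h' : IsOrbital g a' b') (hx : x ∈ Ioo a b) (hx' : x ∈ Ioo a' b') : a = a' := by
  by_contra hne
  rcases lt_or_gt_of_ne hne with hlt | hlt
  · exact h'.2.2.1 (h.2.1 ⟨hlt, hx'.1.trans hx.2⟩)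
  · exact h.2.2.1 (h'.2.1 ⟨hlt, hx.1.trans hx'.2⟩)

lemma exists_eqOn_affine_of_isLocallyAffineAt {p : PermR} {s : Set ℝ} (hso : IsOpen s)
    (hsc : IsPreconnected s) (hs : ∀ x ∈ s, IsLocallyAffineAt p x) :
    ∃ m c : ℝ, EqOn (ap p) (fun x => m * x + c) s := by
  have hloc : ∀ x ∈ s, ∃ m, HasDerivAt (ap p) m x ∧ deriv (ap p) =ᶠ[𝓝 x] fun _ => m := by
    intro x hx
    obtain ⟨m, b, h⟩ := hs x hx
    have hd (y : ℝ) : HasDerivAt (fun y => m * y + b) m y := by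
      simpa using ((hasDerivAt_id y).const_mul m).add_const b
    refine ⟨m, (hd x).congr_of_eventuallyEq h, ?_⟩
    filter_upwards [h.eventually_nhds] with y hy
    exact ((hd y).congr_of_eventuallyEq hy).deriv
  obtain ⟨M, hM⟩ : ∃ M, ∀ x ∈ s, deriv (ap p) x = M := by
    refine hso.exists_is_const_of_deriv_eq_zero hsc (fun x hx => ?_) (fun x hx => ?_)
    · obtain ⟨m, -, h⟩ := hloc x hx
      exact ((hasDerivAt_const x m).congr_of_eventuallyEq h).differentiableAt
        |>.differentiableWithinAt
    · obtain ⟨m, -, h⟩ := hloc x hx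
      simpa using h.deriv_eq
  have hdiff : DifferentiableOn ℝ (ap p) s := fun x hx =>
    (hloc x hx).choose_spec.1.differentiableAt.differentiableWithinAt
  obtain ⟨c, hc⟩ := hso.exists_eq_add_of_deriv_eq hsc hdiff (g := fun x => M * x)
    (by fun_prop) (fun x hx => by simp [hM x hx])
  exact ⟨M, c, hc⟩

lemma exists_eqOn_linear_of_isLocallyAffineAt {p : PermR} (hp : Continuous (ap p))
    {s : Set ℝ} (hso : IsOpen s) (hsc : IsPreconnected s) (hs : ∀ x ∈ s, IsLocallyAffineAt p x)
    {a : ℝ} (ha : a ∈ closure s) (hfix : ap p a = a) :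
    ∃ m : ℝ, EqOn (ap p) (fun x => a + m * (x - a)) (closure s) := by
  obtain ⟨m, c, h⟩ := exists_eqOn_affine_of_isLocallyAffineAt hso hsc hs
  have h' := h.closure hp (by fun_prop)
  have hc : c = a - m * a := by
    have := h' ha
    simp only [hfix] at this
    linarith
  exact ⟨m, fun x hx => by rw [h' hx, hc]; ring⟩

namespace IsPL

variable {p q : PermR}

lemma continuous (hp : IsPL p) : Continuous (ap p) :=
  (hp.1.orderIsoOfSurjective (ap p) p.unop.surjective).continuous

lemma supp_subset (hp : IsPL p) : Supp p ⊆ Ioo 0 1 := fun x hx => by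
  by_contra h
  exact hx (hp.2.1 x h)

lemma finite_setOf_not_isLocallyAffineAt (hp : IsPL p) :
    {x | ¬ IsLocallyAffineAt p x}.Finite := by
  refine (hp.2.2.union (toFinite {0, 1})).subset fun x hx => ?_
  by_contra hmem
  simp only [mem_union, mem_insert_iff, mem_singleton_iff, not_or] at hmem
  obtain ⟨hbreak, h0, h1⟩ := hmem
  have hx01 : x ∉ Ioo (0:ℝ) 1 := fun h => hbreak ⟨h, hx⟩
  have hxI : x ∉ Icc (0:ℝ) 1 := fun h =>
    hx01 ⟨lt_of_le_of_ne h.1 (Ne.symm h0), lt_of_le_of_ne h.2 h1⟩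
  refine hx ⟨1, 0, ?_⟩
  filter_upwards [isClosed_Icc.isOpen_compl.mem_nhds hxI] with y hy
  rw [hp.2.1 y fun h => hy (Ioo_subset_Icc_self h)]
  ring

lemma exists_eventually_eq_two_slopes (hp : IsPL p) {a : ℝ} (hfix : ap p a = a) :
    ∃ m₁ m₂ : ℝ, ∀ᶠ x in 𝓝 a, ap p x = a + (if x < a then m₁ else m₂) * (x - a) := by
  have hnhds : {x | IsLocallyAffineAt p x ∨ x = a} ∈ 𝓝 a := by
    filter_upwards [((hp.finite_setOf_not_isLocallyAffineAt.sdiff (t := {a})).isClosed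
      |>.isOpen_compl).mem_nhds (by simp)] with x hx
    simpa [or_iff_not_imp_left] using hx
  obtain ⟨l, u, ⟨hl, hu⟩, hsub⟩ := mem_nhds_iff_exists_Ioo_subset.1 hnhds
  have hside : ∀ v w, l ≤ v → w ≤ u → a ∉ Ioo v w → a ∈ closure (Ioo v w) →
      ∃ m : ℝ, EqOn (ap p) (fun x => a + m * (x - a)) (Ioo v w) := by
    intro v w hv hw ha hcl
    obtain ⟨m, hm⟩ := exists_eqOn_linear_of_isLocallyAffineAt hp.continuous isOpen_Ioo
      isPreconnected_Ioo (fun x hx => (hsub ⟨hv.trans_lt hx.1, hx.2.trans_le hw⟩).resolve_right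
        fun h => ha (h ▸ hx)) hcl hfix
    exact ⟨m, hm.mono subset_closure⟩
  obtain ⟨m₁, h₁⟩ := hside l a le_rfl hu.le (fun h => h.2.false)
    (by rw [closure_Ioo hl.ne]; exact right_mem_Icc.2 hl.le)
  obtain ⟨m₂, h₂⟩ := hside a u hl.le le_rfl (fun h => h.1.false)
    (by rw [closure_Ioo hu.ne]; exact left_mem_Icc.2 hu.le)
  refine ⟨m₁, m₂, ?_⟩
  filter_upwards [Ioo_mem_nhds hl hu] with x hx
  rcases lt_trichotomy x a with h | rfl | h
  · rw [if_pos h]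
    exact h₁ ⟨hx.1, h⟩
  · simp [hfix]
  · rw [if_neg h.not_gt]
    exact h₂ ⟨h, hx.2⟩

lemma eventually_commute (hp : IsPL p) (hq : IsPL q) {a : ℝ} (hpa : ap p a = a)
    (hqa : ap q a = a) : ∀ᶠ x in 𝓝 a, ap q (ap p x) = ap p (ap q x) := by
  obtain ⟨m₁, m₂, hpx⟩ := hp.exists_eventually_eq_two_slopes hpa
  obtain ⟨n₁, n₂, hqx⟩ := hq.exists_eventually_eq_two_slopes hqa
  have hpt : Tendsto (ap p) (𝓝 a) (𝓝 a) := by simpa only [hpa] using hp.continuous.tendsto a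
  have hqt : Tendsto (ap q) (𝓝 a) (𝓝 a) := by simpa only [hqa] using hq.continuous.tendsto a
  filter_upwards [hpx, hqx, hpt.eventually hqx, hqt.eventually hpx] with x h₁ h₂ h₃ h₄
  have hps : ap p x < a ↔ x < a := by simpa only [hpa] using hp.1.lt_iff_lt (b := a)
  have hqs : ap q x < a ↔ x < a := by simpa only [hqa] using hq.1.lt_iff_lt (b := a)
  rw [h₃, h₄]
  simp only [hps, hqs]
  rw [h₁, h₂]
  split_ifs <;> ring

lemma eventually_ap_commutator_eq (hp : IsPL p) (hq : IsPL q) {a : ℝ} (hpa : ap p a = a)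
    (hqa : ap q a = a) : ∀ᶠ x in 𝓝 a, ap ⁅p, q⁆ x = x := by
  filter_upwards [hp.eventually_commute hq hpa hqa] with x hx
  simp [commutatorElement_def, hx]

lemma exists_isOrbital_mem (hp : IsPL p) {x : ℝ} (hx : x ∈ Supp p) :
    ∃ s t, IsOrbital p s t ∧ x ∈ Ioo s t := by
  have hx01 := hp.supp_subset hx
  have hfix : IsClosed {y | ap p y = y} := isClosed_eq hp.continuous continuous_id
  set X := Iic x ∩ {y | ap p y = y}
  set Y := Ici x ∩ {y | ap p y = y}
  have hXb : BddAbove X := ⟨x, fun y hy => hy.1⟩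
  have hYb : BddBelow Y := ⟨x, fun y hy => hy.1⟩
  have hsX : sSup X ∈ X :=
    (isClosed_Iic.inter hfix).csSup_mem ⟨0, hx01.1.le, hp.2.1 0 (by simp)⟩ hXb
  have htY : sInf Y ∈ Y :=
    (isClosed_Ici.inter hfix).csInf_mem ⟨1, hx01.2.le, hp.2.1 1 (by simp)⟩ hYb
  have hxs : sSup X < x := hsX.1.lt_of_ne fun h => hx (h ▸ hsX.2)
  have hxt : x < sInf Y := htY.1.lt_of_ne' fun h => hx (h ▸ htY.2)
  refine ⟨sSup X, sInf Y, ⟨hxs.trans hxt, fun y hy hyfix => ?_, not_not.2 hsX.2,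
    not_not.2 htY.2⟩, hxs, hxt⟩
  rcases le_total y x with h | h
  · exact (le_csSup hXb ⟨h, hyfix⟩).not_gt hy.1
  · exact (csInf_le hYb ⟨h, hyfix⟩).not_gt hy.2

lemma exists_not_isLocallyAffineAt_of_isOrbital (hp : IsPL p) {a b : ℝ}
    (ho : IsOrbital p a b) : ∃ x ∈ Ioo a b, ¬ IsLocallyAffineAt p x := by
  by_contra! h
  have hcl : closure (Ioo a b) = Icc a b := closure_Ioo ho.1.ne
  obtain ⟨m, hm⟩ := exists_eqOn_linear_of_isLocallyAffineAt hp.continuous isOpen_Ioo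
    isPreconnected_Ioo h (hcl ▸ left_mem_Icc.2 ho.1.le) (not_not.1 ho.2.2.1)
  rw [hcl] at hm
  have hm1 : m = 1 := by
    have hb : b = a + m * (b - a) := (not_not.1 ho.2.2.2).symm.trans (hm (right_mem_Icc.2 ho.1.le))
    have : (m - 1) * (b - a) = 0 := by linear_combination -hb
    linarith [(mul_eq_zero.1 this).resolve_right (sub_ne_zero.2 ho.1.ne')]
  have hmid : (a + b) / 2 ∈ Ioo a b := ⟨by linarith [ho.1], by linarith [ho.1]⟩
  exact ho.2.1 hmid (by rw [hm (Ioo_subset_Icc_self hmid), hm1]; ring)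

lemma finite_setOf_isOrbital_left (hp : IsPL p) : {a | ∃ b, IsOrbital p a b}.Finite := by
  have hsub (x : ℝ) : {a | ∃ b, IsOrbital p a b ∧ x ∈ Ioo a b}.Subsingleton :=
    fun _ ⟨_, hb, hx⟩ _ ⟨_, hb', hx'⟩ => hb.left_eq hb' hx hx'
  refine (hp.finite_setOf_not_isLocallyAffineAt.biUnion fun x _ => (hsub x).finite).subset ?_
  rintro a ⟨b, hab⟩
  obtain ⟨x, hx, hxn⟩ := hp.exists_not_isLocallyAffineAt_of_isOrbital hab
  exact mem_biUnion hxn ⟨b, hab, hx⟩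

end IsPL

section Group

variable {G : Subgroup PermR}

lemma exists_mem_fixing_ap_lt (hPL : ∀ g ∈ G, IsPL g) {g : PermR} (hg : g ∈ G) {a c : ℝ}
    (ha : ap g a = a) (hc : c ∈ Supp g) : ∃ γ ∈ G, ap γ a = a ∧ ap γ c < c := by
  rcases lt_or_gt_of_ne hc with hlt | hgt
  · exact ⟨g, hg, ha, hlt⟩
  · refine ⟨g⁻¹, inv_mem hg, ap_inv_eq_self.2 ha, ?_⟩
    simpa using (hPL _ (inv_mem hg)).1 hgt

lemma exists_mem_fixing_lt_ap (hPL : ∀ g ∈ G, IsPL g) {g : PermR} (hg : g ∈ G) {a c : ℝ}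
    (ha : ap g a = a) (hc : c ∈ Supp g) : ∃ γ ∈ G, ap γ a = a ∧ c < ap γ c := by
  obtain ⟨γ, hγ, hγa, hγc⟩ := exists_mem_fixing_ap_lt hPL hg ha hc
  refine ⟨γ⁻¹, inv_mem hγ, ap_inv_eq_self.2 hγa, ?_⟩
  simpa using (hPL _ (inv_mem hγ)).1 hγc

lemma commutator_inv_mem {γ h : PermR} (hγ : γ ∈ G) (hh : h ∈ G) : ⁅γ⁻¹, h⁆ ∈ G := by
  rw [commutatorElement_def]
  exact mul_mem (mul_mem (mul_mem (inv_mem hγ) hh) (inv_mem (inv_mem hγ))) (inv_mem hh)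

lemma mem_supp_commutator_inv {γ h : PermR} {e : ℝ} (he : ap (γ⁻¹ * h * γ) e = e)
    (hh : e ∈ Supp h) : e ∈ Supp ⁅γ⁻¹, h⁆ := by
  rw [commutatorElement_def, inv_inv]
  show ap h⁻¹ (ap (γ⁻¹ * h * γ) e) ≠ e
  rw [he]
  exact ap_inv_eq_self.not.2 hh

lemma admitsTransitionChain_of_isOrbital_left (hPL : ∀ g ∈ G, IsPL g) {g h : PermR}
    (hg : g ∈ G) (hh : h ∈ G) {a b c : ℝ} (hog : IsOrbital g a b) (hoh : IsOrbital h a c)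
    (hcb : c < b) : AdmitsTransitionChain G := by
  obtain ⟨γ, hγ, hγa, hγc⟩ :=
    exists_mem_fixing_ap_lt hPL hg (not_not.1 hog.2.2.1) (hog.2.1 ⟨hoh.1, hcb⟩)
  have hou : IsOrbital (γ⁻¹ * h * γ) a (ap γ c) := by
    simpa only [hγa] using hoh.conj (hPL γ hγ).1
  obtain ⟨z, hzfix, hz⟩ := ((((hPL _ (inv_mem hγ)).eventually_ap_commutator_eq (hPL h hh)
    (ap_inv_eq_self.2 hγa) (not_not.1 hoh.2.2.1)).filter_mono nhdsWithin_le_nhds).and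
    (Ioo_mem_nhdsGT hou.1)).exists
  obtain ⟨s, t, how, hst⟩ := (hPL _ (commutator_inv_mem hγ hh)).exists_isOrbital_mem
    (mem_supp_commutator_inv (not_not.1 hou.2.2.2) (hoh.2.1 ⟨hou.1, hγc⟩))
  have hzs : z ≤ s := le_of_not_gt fun hzs => how.2.1 ⟨hzs, hz.2.trans hst.2⟩ hzfix
  exact ⟨_, mul_mem (mul_mem (inv_mem hγ) hh) hγ, _, commutator_inv_mem hγ hh,
    a, ap γ c, s, t, hou, how, hz.1.trans_le hzs, hst.1, hst.2⟩

lemma admitsTransitionChain_of_isOrbital_right (hPL : ∀ g ∈ G, IsPL g) {g h : PermR}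
    (hg : g ∈ G) (hh : h ∈ G) {a b c : ℝ} (hog : IsOrbital g a b) (hoh : IsOrbital h c b)
    (hac : a < c) : AdmitsTransitionChain G := by
  obtain ⟨γ, hγ, hγb, hγc⟩ :=
    exists_mem_fixing_lt_ap hPL hg (not_not.1 hog.2.2.2) (hog.2.1 ⟨hac, hoh.1⟩)
  have hou : IsOrbital (γ⁻¹ * h * γ) (ap γ c) b := by
    simpa only [hγb] using hoh.conj (hPL γ hγ).1
  obtain ⟨z, hzfix, hz⟩ := ((((hPL _ (inv_mem hγ)).eventually_ap_commutator_eq (hPL h hh)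
    (ap_inv_eq_self.2 hγb) (not_not.1 hoh.2.2.2)).filter_mono nhdsWithin_le_nhds).and
    (Ioo_mem_nhdsLT hou.1)).exists
  obtain ⟨s, t, how, hst⟩ := (hPL _ (commutator_inv_mem hγ hh)).exists_isOrbital_mem
    (mem_supp_commutator_inv (not_not.1 hou.2.2.1) (hoh.2.1 ⟨hγc, hou.1⟩))
  have htz : t ≤ z := le_of_not_gt fun hzt => how.2.1 ⟨hst.1.trans hz.1, hzt⟩ hzfix
  exact ⟨_, commutator_inv_mem hγ hh, _, mul_mem (mul_mem (inv_mem hγ) hh) hγ,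
    s, t, ap γ c, b, how, hou, hst.1, hst.2, htz.trans_lt hz.2⟩

theorem AdmitsOneSidedOverlap.admitsTransitionChain (hPL : ∀ g ∈ G, IsPL g)
    (hG : AdmitsOneSidedOverlap G) : AdmitsTransitionChain G := by
  obtain ⟨g, hg, h, hh, a, b, c, hac, hcb, ⟨hog, hoh⟩ | ⟨hog, hoh⟩⟩ := hG
  exacts [admitsTransitionChain_of_isOrbital_left hPL hg hh hog hoh hcb,
    admitsTransitionChain_of_isOrbital_right hPL hg hh hog hoh hac]

def IsTransitionChainAt (g h : PermR) (a : ℝ) : Prop :=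
  ∃ b c d : ℝ, IsOrbital g a b ∧ IsOrbital h c d ∧ a < c ∧ c < b ∧ b < d

lemma IsTransitionChainAt.exists_lt {g h : PermR} (hh : IsPL h) {a : ℝ}
    (H : IsTransitionChainAt g h a) (ha : a ∈ Supp h) : ∃ p < a, IsTransitionChainAt h g p := by
  obtain ⟨b, c, d, hog, hoh, hac, hcb, -⟩ := H
  obtain ⟨p, q, hopq, hpa, haq⟩ := hh.exists_isOrbital_mem ha
  have hqc : q ≤ c := le_of_not_gt fun hcq => hoh.2.2.1 (hopq.2.1 ⟨hpa.trans hac, hcq⟩)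
  exact ⟨p, hpa, q, a, b, hopq, hog, hpa, haq, hqc.trans_lt hcb⟩

lemma admitsOneSidedOverlap_of_isOrbital_of_fixed (hPL : ∀ g ∈ G, IsPL g) {g h : PermR}
    (hg : g ∈ G) (hh : h ∈ G) {a b : ℝ} (hog : IsOrbital g a b) (ha : ap h a = a)
    (hb : b ∈ Supp h) : AdmitsOneSidedOverlap G := by
  have hou : IsOrbital (h⁻¹ * g * h) a (ap h b) := by
    simpa only [ha] using hog.conj (hPL h hh).1
  have huG : h⁻¹ * g * h ∈ G := mul_mem (mul_mem (inv_mem hh) hg) hh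
  rcases lt_or_gt_of_ne hb with hlt | hgt
  · exact ⟨g, hg, _, huG, a, b, ap h b, hou.1, hlt, .inl ⟨hog, hou⟩⟩
  · exact ⟨_, huG, g, hg, a, ap h b, b, hog.1, hgt, .inl ⟨hou, hog⟩⟩

lemma admitsOneSidedOverlap_of_isTransitionChainAt (hPL : ∀ g ∈ G, IsPL g) {g h : PermR}
    (hg : g ∈ G) (hh : h ∈ G) {a : ℝ} (H : IsTransitionChainAt g h a)
    (hmin : ∀ p, IsTransitionChainAt h g p → a ≤ p) : AdmitsOneSidedOverlap G := by
  by_cases ha : a ∈ Supp h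
  · obtain ⟨p, hpa, hp⟩ := H.exists_lt (hPL h hh) ha
    exact absurd (hmin p hp) hpa.not_ge
  · obtain ⟨b, c, d, hog, hoh, -, hcb, hbd⟩ := H
    exact admitsOneSidedOverlap_of_isOrbital_of_fixed hPL hg hh hog (not_not.1 ha)
      (hoh.2.1 ⟨hcb, hbd⟩)

theorem AdmitsTransitionChain.admitsOneSidedOverlap (hPL : ∀ g ∈ G, IsPL g)
    (hG : AdmitsTransitionChain G) : AdmitsOneSidedOverlap G := by
  obtain ⟨g, hg, h, hh, a₀, H₀⟩ := hG
  set S := {a | IsTransitionChainAt g h a ∨ IsTransitionChainAt h g a}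
  have hS : S.Finite := by
    refine ((hPL g hg).finite_setOf_isOrbital_left.union
      (hPL h hh).finite_setOf_isOrbital_left).subset ?_
    rintro a (⟨b, -, -, hab, -⟩ | ⟨b, -, -, hab, -⟩)
    exacts [.inl ⟨b, hab⟩, .inr ⟨b, hab⟩]
  obtain ⟨a, H | H, hmin⟩ := Set.exists_min_image S id hS ⟨a₀, .inl H₀⟩
  · exact admitsOneSidedOverlap_of_isTransitionChainAt hPL hg hh H fun p hp => hmin p (.inr hp)
  · exact admitsOneSidedOverlap_of_isTransitionChainAt hPL hh hg H fun p hp => hmin p (.inl hp)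

theorem AdmitsTransitionChain.admitsBadOverlap (hG : AdmitsTransitionChain G) :
    AdmitsBadOverlap G := by
  obtain ⟨g, hg, h, hh, a, b, c, d, hog, hoh, hac, hcb, hbd⟩ := hG
  refine ⟨g, hg, h, hh, a, b, c, d, hog, hoh, ⟨(c + b) / 2, ?_, ?_⟩, fun he => ?_,
    fun hs => ?_, fun hs => ?_⟩
  · constructor <;> linarith
  · constructor <;> linarith
  · have : c ∈ Ioo c d := he ▸ ⟨hac, hcb⟩
    exact this.1.false
  · exact (hs (left_mem_Icc.2 hog.1.le)).1.not_gt hac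
  · exact (hs (right_mem_Icc.2 hoh.1.le)).2.not_gt hbd

theorem AdmitsBadOverlap.admitsTransitionChain_or_admitsOneSidedOverlap
    (hG : AdmitsBadOverlap G) : AdmitsTransitionChain G ∨ AdmitsOneSidedOverlap G := by
  obtain ⟨f, hf, g, hg, a, b, c, d, hof, hog, ⟨x, hx, hx'⟩, hne, hab, hcd⟩ := hG
  have hIcc {a b c d : ℝ} (h₁ : c < a) (h₂ : b < d) : Icc a b ⊆ Ioo c d :=
    fun y hy => ⟨h₁.trans_le hy.1, hy.2.trans_lt h₂⟩
  rcases lt_trichotomy a c with hac | rfl | hca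
  · rcases lt_trichotomy b d with hbd | rfl | hdb
    · exact .inl ⟨f, hf, g, hg, a, b, c, d, hof, hog, hac, hx'.1.trans hx.2, hbd⟩
    · exact .inr ⟨f, hf, g, hg, a, b, c, hac, hx'.1.trans hx.2, .inr ⟨hof, hog⟩⟩
    · exact absurd (hIcc hac hdb) hcd
  · rcases lt_trichotomy b d with hbd | rfl | hdb
    · exact .inr ⟨g, hg, f, hf, a, d, b, hof.1, hbd, .inl ⟨hog, hof⟩⟩
    · exact absurd rfl hne
    · exact .inr ⟨f, hf, g, hg, a, b, d, hog.1, hdb, .inl ⟨hof, hog⟩⟩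
  · rcases lt_trichotomy d b with hdb | rfl | hbd
    · exact .inl ⟨g, hg, f, hf, c, d, a, b, hog, hof, hca, hx.1.trans hx'.2, hdb⟩
    · exact .inr ⟨g, hg, f, hf, c, d, a, hca, hx.1.trans hx'.2, .inr ⟨hog, hof⟩⟩
    · exact absurd (hIcc hca hbd) hab

end Group

theorem statement4 (G : Subgroup PermR) (hPL : ∀ g ∈ G, IsPL g) :
    (AdmitsTransitionChain G ↔ AdmitsOneSidedOverlap G) ∧
    (AdmitsTransitionChain G ↔ AdmitsBadOverlap G) := by
  have tc_iff_oso : AdmitsTransitionChain G ↔ AdmitsOneSidedOverlap G :=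
    ⟨AdmitsTransitionChain.admitsOneSidedOverlap hPL,
      AdmitsOneSidedOverlap.admitsTransitionChain hPL⟩
  refine ⟨tc_iff_oso, AdmitsTransitionChain.admitsBadOverlap, fun h => ?_⟩
  exact h.admitsTransitionChain_or_admitsOneSidedOverlap.elim id tc_iff_oso.2

end PLPaper
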